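/- arXiv:2502.18096 — 2 statements merged into one kernel-verified Lean document; each statement's English description precedes it below -/
import Mathlib

section
/- Branching rule for the idempotents: if V is a standard barred tableau with n−1 boxes, then in the Sergeev superalgebra S_n one has e_V = Σ_W e_W, where the sum runs over all standard barred tableaux W with n boxes obtained from V by adding one box containing the entry n or n̄ (here e_V is computed in S_{n−1}, viewed inside S_n via the natural inclusion sending t_a ↦ t_a, c_a ↦ c_a). -/
open scoped Classical

noncomputable section

/-- Generators of the Sergeev superalgebra: `T a` for `1 ≤ a ≤ n-1`, `C a` for `1 ≤ a ≤ n`. -/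
inductive SGen (n : ℕ) : Type
  | T : {a : ℕ // 1 ≤ a ∧ a < n} → SGen n
  | C : {a : ℕ // 1 ≤ a ∧ a ≤ n} → SGen n

/-- The generator `t_a` in the free algebra (junk value `0` outside the valid range). -/
def tf (n a : ℕ) : FreeAlgebra ℂ (SGen n) :=
  if h : 1 ≤ a ∧ a < n then FreeAlgebra.ι ℂ (SGen.T ⟨a, h⟩) else 0

/-- The generator `c_a` in the free algebra (junk value `0` outside the valid range). -/
def cf (n a : ℕ) : FreeAlgebra ℂ (SGen n) :=
  if h : 1 ≤ a ∧ a ≤ n then FreeAlgebra.ι ℂ (SGen.C ⟨a, h⟩) else 0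

/-- Defining relations of the Sergeev superalgebra `S_n`. -/
inductive SRel (n : ℕ) : FreeAlgebra ℂ (SGen n) → FreeAlgebra ℂ (SGen n) → Prop
  | tsq (a : ℕ) (h1 : 1 ≤ a) (h2 : a < n) : SRel n (tf n a * tf n a) 1
  | tbraid (a : ℕ) (h1 : 1 ≤ a) (h2 : a + 1 < n) :
      SRel n (tf n a * tf n (a + 1) * tf n a) (tf n (a + 1) * tf n a * tf n (a + 1))
  | tanti (a b : ℕ) (h1 : 1 ≤ a) (h2 : b < n) (h3 : a + 1 < b) :
      SRel n (tf n a * tf n b) (-(tf n b * tf n a))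
  | csq (a : ℕ) (h1 : 1 ≤ a) (h2 : a ≤ n) : SRel n (cf n a * cf n a) (-1)
  | canti (a b : ℕ) (h1 : 1 ≤ a) (h2 : a ≤ n) (h3 : 1 ≤ b) (h4 : b ≤ n) (h5 : a ≠ b) :
      SRel n (cf n a * cf n b) (-(cf n b * cf n a))
  | tc (a b : ℕ) (h1 : 1 ≤ a) (h2 : a < n) (h3 : 1 ≤ b) (h4 : b ≤ n) :
      SRel n (tf n a * cf n b) (-(cf n b * tf n a))

/-- The Sergeev superalgebra `S_n`, presented by generators and relations. -/
abbrev Sergeev (n : ℕ) : Type := RingQuot (SRel n)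

/-- The generator `t_a` of `S_n`. -/
def tS (n a : ℕ) : Sergeev n := RingQuot.mkAlgHom ℂ (SRel n) (tf n a)

/-- The generator `c_a` of `S_n`. -/
def cS (n a : ℕ) : Sergeev n := RingQuot.mkAlgHom ℂ (SRel n) (cf n a)

/-- `t_{ab} = (-1)^(b-a-1) t_{b-1} ⋯ t_{a+1} t_a t_{a+1} ⋯ t_{b-1}` for `a < b`. -/
def ttS (n a b : ℕ) : Sergeev n :=
  (-1 : ℂ) ^ (b - a - 1) •
    ((((List.range' (a + 1) (b - 1 - a)).reverse.map (tS n)).prod) * tS n a *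
      (((List.range' (a + 1) (b - 1 - a)).map (tS n)).prod))

/-- `t_{ab}` for all `a ≠ b`, with `t_{ba} = -t_{ab}`. -/
def tsgn (n a b : ℕ) : Sergeev n :=
  if a < b then ttS n a b else if b < a then -ttS n b a else 0

/-- The odd Jucys–Murphy element `m_a = t_{1a} + ⋯ + t_{a-1,a}`. -/
def mS (n a : ℕ) : Sergeev n := ∑ k ∈ Finset.Ico 1 a, tsgn n k a

/-- The (even) Jucys–Murphy element `x_a = √2 m_a c_a`. -/
def xS (n a : ℕ) : Sergeev n := (Real.sqrt 2 : ℂ) • (mS n a * cS n a)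

/-- `s_a = (1/√2) t_a (c_{a+1} - c_a)`. -/
def sS (n a : ℕ) : Sergeev n := ((Real.sqrt 2 : ℂ))⁻¹ • (tS n a * (cS n (a + 1) - cS n a))

/-- The intertwiner `φ_a`. -/
def phiS (n a : ℕ) : Sergeev n :=
  sS n a * (xS n a ^ 2 - xS n (a + 1) ^ 2) + xS n a + xS n (a + 1)
    - cS n a * cS n (a + 1) * (xS n a - xS n (a + 1))

/-- Boxes of the shifted Young diagram of a strict partition `lam` (1-based): the
box `(i,j)` is present iff `i ≤ j ≤ λ_i + i - 1`. -/
def cells (lam : List ℕ) : Set (ℕ × ℕ) :=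
  {p | 1 ≤ p.1 ∧ p.1 ≤ p.2 ∧ p.2 + 1 ≤ lam.getD (p.1 - 1) 0 + p.1}

/-- A standard barred tableau with `n` boxes: a strict partition `lam` of `n`,
a standard filling `entry` of the shifted diagram of `lam` by `1, …, n`
(increasing along rows and columns), and a set `barred` of barred entries,
none of which occupies a diagonal box. -/
structure SBT (n : ℕ) : Type where
  lam : List ℕ
  sorted : lam.Pairwise (· > ·)
  pos : ∀ p ∈ lam, 0 < p
  sum_eq : lam.sum = n
  entry : ℕ × ℕ → ℕ
  bij : Set.BijOn entry (cells lam) (Set.Icc 1 n)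
  entry_junk : ∀ p, p ∉ cells lam → entry p = 0
  row_incr : ∀ p ∈ cells lam, (p.1, p.2 + 1) ∈ cells lam → entry p < entry (p.1, p.2 + 1)
  col_incr : ∀ p ∈ cells lam, (p.1 + 1, p.2) ∈ cells lam → entry p < entry (p.1 + 1, p.2)
  barred : Set ℕ
  barred_sub : barred ⊆ Set.Icc 1 n
  barred_nondiag : ∀ p ∈ cells lam, entry p ∈ barred → p.1 ≠ p.2

/-- The box occupied by the entry `a`. -/
def SBT.box {n : ℕ} (U : SBT n) (a : ℕ) : ℕ × ℕ :=
  if h : ∃ p ∈ cells U.lam, U.entry p = a then h.choose else (0, 0)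

/-- The content `j - i` of the box occupied by the entry `a`. -/
def SBT.content {n : ℕ} (U : SBT n) (a : ℕ) : ℕ := (U.box a).2 - (U.box a).1

/-- The signed content `κ_a(U) = ± √(σ(σ+1))`, negative iff `a` is barred in `U`. -/
def SBT.kappa {n : ℕ} (U : SBT n) (a : ℕ) : ℂ :=
  (if a ∈ U.barred then -1 else 1) *
    ((Real.sqrt ((U.content a : ℝ) * ((U.content a : ℝ) + 1)) : ℝ) : ℂ)

/-- A set of boxes is (the set of boxes of) a shifted Young diagram of a strict partition. -/
def IsShifted (S : Set (ℕ × ℕ)) : Prop :=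
  (∀ p ∈ S, 1 ≤ p.1 ∧ p.1 ≤ p.2) ∧
  (∀ p ∈ S, p.1 < p.2 → (p.1, p.2 - 1) ∈ S) ∧
  (∀ p ∈ S, 1 < p.1 → (p.1 - 1, p.2) ∈ S)

/-- `q` is an addable box for the shifted diagram `S`. -/
def Addable (S : Set (ℕ × ℕ)) (q : ℕ × ℕ) : Prop := q ∉ S ∧ IsShifted (insert q S)

/-- The shape formed by the boxes of `U` holding the entries `1, …, k`. -/
def SBT.shapeAt {n : ℕ} (U : SBT n) (k : ℕ) : Set (ℕ × ℕ) :=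
  {p | p ∈ cells U.lam ∧ U.entry p ≤ k}

/-- `√(σ(σ+1))` where `σ` is the content of the box `q`. -/
def sqc (q : ℕ × ℕ) : ℂ :=
  ((Real.sqrt (((q.2 - q.1 : ℕ) : ℝ) * (((q.2 - q.1 : ℕ) : ℝ) + 1)) : ℝ) : ℂ)

/-- The signed contents of all possible barred or unbarred entries placed
in addable boxes of the shape `S` (a shape with at most `n` boxes). -/
def bVals (n : ℕ) (S : Set (ℕ × ℕ)) : Finset ℂ :=
  ((Finset.Icc 1 (n + 1) ×ˢ Finset.Icc 1 (n + 1)).filter fun q => Addable S q).biUnion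
    fun q => if q.1 = q.2 then {sqc q} else {sqc q, -sqc q}

/-- The Jucys–Murphy idempotent of the sub-tableau of `U` on the entries `1, …, k`,
computed in the ambient algebra `S_N` (the inclusion `S_r → S_N` sends `t_a ↦ t_a`,
`c_a ↦ c_a` and hence `x_a ↦ x_a`, so this represents the image of `e` under it). -/
def eAux (N : ℕ) {r : ℕ} (U : SBT r) : ℕ → Sergeev N
  | 0 => 1
  | 1 => 1
  | (k + 2) =>
      eAux N U (k + 1) *
        Polynomial.aeval (xS N (k + 2))
          (∏ b ∈ bVals r (U.shapeAt (k + 1)) \ {U.kappa (k + 2)},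
            (Polynomial.C ((U.kappa (k + 2) - b)⁻¹) * (Polynomial.X - Polynomial.C b)))

/-- The element `e_U` of a standard barred tableau `U` with `r` boxes, viewed in `S_N`. -/
def eIn (N : ℕ) {r : ℕ} (U : SBT r) : Sergeev N := eAux N U r

/-- The element `e_U ∈ S_n` associated with a standard barred tableau `U` with `n` boxes. -/
def eU {n : ℕ} (U : SBT n) : Sergeev n := eIn n U

/-- `W` is a standard barred tableau with `r + 1` boxes obtained from the standard
barred tableau `V` with `r` boxes by adding one box containing the entry `r+1`
(barred or unbarred). -/
def Extends {r : ℕ} (V : SBT r) (W : SBT (r + 1)) : Prop :=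
  cells V.lam ⊆ cells W.lam ∧ (∀ p ∈ cells V.lam, W.entry p = V.entry p) ∧
    V.barred = W.barred \ {r + 1}

/-!
Let `B` be the set of signed contents of the possible entries `n + 1` in addable boxes of `V`,
and `L_κ` (`κ ∈ B`) the Lagrange basis polynomials on the nodes `B`. By the recursive definition,
`e_W = e_V · L_κ(x_{n+1})` with `κ = κ_{n+1}(W)` for every extension `W` of `V`. Addable boxes
have pairwise distinct contents, and `σ ↦ √(σ(σ+1))` is injective and vanishes only at `σ = 0`,
where no bar is allowed; so `W ↦ κ_{n+1}(W)` is a bijection from the extensions of `V` onto `B`.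
Hence `Σ_W e_W = e_V · (Σ_{κ ∈ B} L_κ)(x_{n+1}) = e_V`, since the Lagrange basis sums to `1`.
-/

theorem mem_cells {lam : List ℕ} {i j : ℕ} :
    (i, j) ∈ cells lam ↔ 1 ≤ i ∧ i ≤ j ∧ j + 1 ≤ lam.getD (i - 1) 0 + i :=
  Iff.rfl

theorem IsShifted.mem_of_le {T : Set (ℕ × ℕ)} (hT : IsShifted T) {i j i' j' : ℕ}
    (h : (i, j) ∈ T) (hi' : 1 ≤ i') (hii' : i' ≤ i) (hij' : i' ≤ j') (hjj' : j' ≤ j) :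
    (i', j') ∈ T := by
  have up : ∀ m, i' ≤ m → (m, j) ∈ T → (i', j) ∈ T := by
    intro m hm
    induction m, hm using Nat.le_induction with
    | base => exact id
    | succ m hm ih => exact fun h' => ih (by simpa using hT.2.2 _ h' (by simp; omega))
  have left : ∀ m, j' ≤ m → (i', m) ∈ T → (i', j') ∈ T := by
    intro m hm
    induction m, hm using Nat.le_induction with
    | base => exact id
    | succ m hm ih => exact fun h' => ih (by simpa using hT.2.1 _ h' (by simp; omega))
  exact left j hjj' (up i hii' h)

/-- The hook of `p` inside `T` already has `p.2` boxes. -/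
theorem IsShifted.snd_le_ncard {T : Set (ℕ × ℕ)} (hT : IsShifted T) (hfin : T.Finite)
    {p : ℕ × ℕ} (hp : p ∈ T) : p.2 ≤ T.ncard := by
  obtain ⟨h1, h12⟩ := hT.1 p hp
  let hook : ℕ → ℕ × ℕ := fun k => if k ≤ p.1 then (k, p.2) else (p.1, k - 1)
  have hmaps : ∀ k ∈ Finset.Icc 1 p.2, hook k ∈ hfin.toFinset := by
    intro k hk
    rw [Finset.mem_Icc] at hk
    rw [Set.Finite.mem_toFinset]
    by_cases hkp : k ≤ p.1
    · simpa [hook, hkp] using hT.mem_of_le hp hk.1 hkp (by omega) le_rfl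
    · simpa [hook, hkp] using hT.mem_of_le hp h1 le_rfl (by omega) (by omega)
  have hinj : Set.InjOn hook (Finset.Icc 1 p.2) := by
    intro a ha b hb hab
    simp only [Finset.coe_Icc, Set.mem_Icc] at ha hb
    simp only [hook] at hab
    split_ifs at hab <;> simp only [Prod.mk.injEq] at hab <;> omega
  have := Finset.card_le_card_of_injOn hook hmaps hinj
  rwa [Nat.card_Icc, Nat.add_sub_cancel, ← Set.ncard_eq_toFinset_card _ hfin] at this

theorem Addable.bounds {S : Set (ℕ × ℕ)} {q : ℕ × ℕ} (hq : Addable S q) (hfin : S.Finite) :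
    1 ≤ q.1 ∧ q.1 ≤ q.2 ∧ q.2 ≤ S.ncard + 1 := by
  have h := hq.2.snd_le_ncard (hfin.insert q) (Set.mem_insert q S)
  rw [Set.ncard_insert_of_notMem hq.1 hfin] at h
  exact ⟨(hq.2.1 q (Set.mem_insert q S)).1, (hq.2.1 q (Set.mem_insert q S)).2, h⟩

section StrictPartition

variable {lam : List ℕ}

theorem getD_pos (hpos : ∀ p ∈ lam, 0 < p) {k : ℕ} (hk : k < lam.length) :
    0 < lam.getD k 0 := by
  rw [List.getD_eq_getElem lam 0 hk]
  exact hpos _ (List.getElem_mem hk)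

theorem lt_length_of_getD_pos {k : ℕ} (h : 0 < lam.getD k 0) : k < lam.length := by
  by_contra hk
  rw [List.getD_eq_default lam 0 (not_lt.1 hk)] at h
  exact h.false

theorem getD_lt_getD (hs : lam.Pairwise (· > ·)) {i j : ℕ} (hij : i < j)
    (hj : j < lam.length) : lam.getD j 0 < lam.getD i 0 := by
  rw [List.getD_eq_getElem lam 0 (hij.trans hj), List.getD_eq_getElem lam 0 hj]
  exact List.pairwise_iff_getElem.1 hs i j (hij.trans hj) hj hij

theorem getD_injOn (hs : lam.Pairwise (· > ·)) (hpos : ∀ p ∈ lam, 0 < p) {i j : ℕ}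
    (hi : i ≤ lam.length) (hj : j ≤ lam.length) (h : lam.getD i 0 = lam.getD j 0) : i = j := by
  have key : ∀ {a b}, a < b → b ≤ lam.length → lam.getD b 0 < lam.getD a 0 := fun hab hb =>
    hb.lt_or_eq.elim (getD_lt_getD hs hab) fun hb => by
      rw [hb, List.getD_eq_default lam 0 le_rfl]; exact getD_pos hpos (by omega)
  rcases lt_trichotomy i j with hij | hij | hij
  · exact absurd h (key hij hj).ne'
  · exact hij
  · exact absurd h (key hij hi).ne

theorem pairwise_gt_of_getD (h : ∀ k, k + 1 < lam.length → lam.getD (k + 1) 0 < lam.getD k 0) :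
    lam.Pairwise (· > ·) :=
  List.isChain_iff_pairwise.1 <| List.isChain_iff_getElem.2 fun k hk => by
    have := h k hk
    rwa [List.getD_eq_getElem _ _ hk, List.getD_eq_getElem _ _ (Nat.lt_of_succ_lt hk)] at this

theorem getElem?_eq_of_pos (hpos : ∀ p ∈ lam, 0 < p) (k : ℕ) :
    lam[k]? = if 0 < lam.getD k 0 then some (lam.getD k 0) else none := by
  by_cases hk : k < lam.length
  · rw [if_pos (getD_pos hpos hk), List.getD_eq_getElem _ _ hk, List.getElem?_eq_getElem hk]
  · rw [List.getD_eq_default _ _ (not_lt.1 hk), if_neg (lt_irrefl 0),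
      List.getElem?_eq_none (not_lt.1 hk)]

theorem cells_isShifted (hs : lam.Pairwise (· > ·)) : IsShifted (cells lam) := by
  refine ⟨fun p hp => ⟨hp.1, hp.2.1⟩, fun p ⟨h1, h2, h3⟩ hlt => ?_, fun p ⟨h1, h2, h3⟩ hlt => ?_⟩
  · exact mem_cells.2 ⟨h1, by omega, by omega⟩
  · have hk : p.1 - 1 < lam.length := lt_length_of_getD_pos (by omega)
    have := getD_lt_getD hs (show p.1 - 1 - 1 < p.1 - 1 by omega) hk
    exact mem_cells.2 ⟨by omega, by omega, by omega⟩

theorem getD_le_getD_of_cells_subset {lam' : List ℕ} (h : cells lam ⊆ cells lam') (k : ℕ) :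
    lam.getD k 0 ≤ lam'.getD k 0 := by
  rcases Nat.eq_zero_or_pos (lam.getD k 0) with h0 | h0
  · omega
  · have hmem : (k + 1, lam.getD k 0 + k) ∈ cells lam :=
      mem_cells.2 ⟨by omega, by omega, by simp⟩
    have := (mem_cells.1 (h hmem)).2.2
    simp only [Nat.add_sub_cancel] at this
    omega

theorem eq_of_cells_eq {lam' : List ℕ} (hpos : ∀ p ∈ lam, 0 < p) (hpos' : ∀ p ∈ lam', 0 < p)
    (h : cells lam = cells lam') : lam = lam' :=
  List.ext_getElem? fun k => by
    rw [getElem?_eq_of_pos hpos, getElem?_eq_of_pos hpos',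
      le_antisymm (getD_le_getD_of_cells_subset h.le k) (getD_le_getD_of_cells_subset h.ge k)]

theorem addable_cells_iff (hs : lam.Pairwise (· > ·)) {q : ℕ × ℕ} :
    Addable (cells lam) q ↔ 1 ≤ q.1 ∧ q.2 = lam.getD (q.1 - 1) 0 + q.1 ∧
      (2 ≤ q.1 → lam.getD (q.1 - 1) 0 + 2 ≤ lam.getD (q.1 - 2) 0) := by
  obtain ⟨i, j⟩ := q
  dsimp only
  constructor
  · rintro ⟨hnot, hsh⟩
    have hq := Set.mem_insert (i, j) (cells lam)
    obtain ⟨h1, h12⟩ : 1 ≤ i ∧ i ≤ j := hsh.1 _ hq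
    have hnot' : ¬ j + 1 ≤ lam.getD (i - 1) 0 + i := fun h => hnot (mem_cells.2 ⟨h1, h12, h⟩)
    have hrow : j = lam.getD (i - 1) 0 + i := by
      rcases h12.lt_or_eq with hlt | rfl
      · have hl := hsh.2.1 _ hq hlt
        dsimp only at hl
        rw [Set.mem_insert_iff, Prod.mk.injEq] at hl
        have := (mem_cells.1 (hl.resolve_left (by omega))).2.2
        omega
      · omega
    refine ⟨h1, hrow, fun h2 => ?_⟩
    have hu := hsh.2.2 _ hq (by dsimp only; omega)
    dsimp only at hu
    rw [Set.mem_insert_iff, Prod.mk.injEq] at hu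
    have := (mem_cells.1 (hu.resolve_left (by omega))).2.2
    rw [show i - 1 - 1 = i - 2 by omega] at this
    omega
  · rintro ⟨h1, hrow, habove⟩
    refine ⟨fun h => by have := (mem_cells.1 h).2.2; omega, ?_, ?_, ?_⟩
    · rintro p (rfl | hp)
      · exact ⟨h1, by dsimp only; omega⟩
      · exact (cells_isShifted hs).1 p hp
    · rintro p (rfl | hp) hlt
      · dsimp only at hlt ⊢
        exact Or.inr (mem_cells.2 ⟨h1, by omega, by omega⟩)
      · exact Or.inr ((cells_isShifted hs).2.1 p hp hlt)
    · rintro p (rfl | hp) hlt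
      · dsimp only at hlt ⊢
        have := habove hlt
        exact Or.inr (mem_cells.2
          ⟨by omega, by omega, by rw [show i - 1 - 1 = i - 2 by omega]; omega⟩)
      · exact Or.inr ((cells_isShifted hs).2.2 p hp hlt)

theorem pairwise_gt_of_isShifted (hpos : ∀ p ∈ lam, 0 < p) (h : IsShifted (cells lam)) :
    lam.Pairwise (· > ·) := by
  refine pairwise_gt_of_getD fun k hk => ?_
  have hv := getD_pos hpos hk
  have hlast : (k + 2, lam.getD (k + 1) 0 + k + 1) ∈ cells lam :=
    mem_cells.2 ⟨by omega, by omega, by simp; omega⟩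
  have := (mem_cells.1 (h.2.2 _ hlast (by dsimp only; omega))).2.2
  simp only [show k + 2 - 1 - 1 = k by omega] at this
  omega

theorem Addable.row_le_length (hs : lam.Pairwise (· > ·)) {q : ℕ × ℕ}
    (hq : Addable (cells lam) q) : q.1 - 1 ≤ lam.length := by
  obtain ⟨h1, -, habove⟩ := (addable_cells_iff hs).1 hq
  by_contra hlen
  have := habove (by omega)
  rw [List.getD_eq_default _ _ (by omega)] at this
  have := lt_length_of_getD_pos (show 0 < lam.getD (q.1 - 2) 0 by omega)
  omega

/-- Rows are counted from `1`, as in `cells`. -/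
def addToRow (lam : List ℕ) (i : ℕ) : List ℕ :=
  if i - 1 < lam.length then lam.set (i - 1) (lam.getD (i - 1) 0 + 1) else lam ++ [1]

variable {i : ℕ}

theorem getD_addToRow (hi : i - 1 ≤ lam.length) (k : ℕ) :
    (addToRow lam i).getD k 0 =
      if k = i - 1 then lam.getD (i - 1) 0 + 1 else lam.getD k 0 := by
  unfold addToRow
  split_ifs with hlt hk hk
  · simp [List.getD_eq_getElem?_getD, hk, hlt]
  · simp [List.getD_eq_getElem?_getD, Ne.symm hk]
  · subst hk
    simp [List.getD_eq_getElem?_getD, show i - 1 = lam.length by omega]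
  · simp only [List.getD_eq_getElem?_getD, List.getElem?_append]
    split_ifs with hk'
    · rfl
    · rw [List.getElem?_eq_none (by omega : lam.length ≤ k), List.getElem?_eq_none (by simp; omega)]

theorem sum_addToRow : (addToRow lam i).sum = lam.sum + 1 := by
  unfold addToRow
  split_ifs with hlt
  · rw [List.sum_set, if_pos hlt, List.getD_eq_getElem _ _ hlt,
      ← List.sum_take_add_sum_drop lam (i - 1), List.drop_eq_getElem_cons hlt, List.sum_cons]
    ring
  · simp

theorem pos_of_mem_addToRow (hpos : ∀ p ∈ lam, 0 < p) : ∀ p ∈ addToRow lam i, 0 < p := by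
  unfold addToRow
  split_ifs
  · intro p hp
    rcases List.mem_or_eq_of_mem_set hp with hp | rfl
    · exact hpos p hp
    · omega
  · simp only [List.mem_append, List.mem_singleton]
    rintro p (hp | rfl)
    exacts [hpos p hp, one_pos]

theorem cells_addToRow (h1 : 1 ≤ i) (hi : i - 1 ≤ lam.length) :
    cells (addToRow lam i) = insert (i, lam.getD (i - 1) 0 + i) (cells lam) := by
  ext ⟨x, y⟩
  simp only [Set.mem_insert_iff, mem_cells, Prod.mk.injEq, getD_addToRow hi]
  by_cases hx : x = i
  · subst hx
    rw [if_pos rfl]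
    omega
  · rcases Nat.eq_zero_or_pos x with rfl | hx0
    · omega
    · rw [if_neg (by omega)]
      tauto

theorem Addable.eq_of_content_eq (hs : lam.Pairwise (· > ·))
    (hpos : ∀ p ∈ lam, 0 < p) {q q' : ℕ × ℕ} (hq : Addable (cells lam) q)
    (hq' : Addable (cells lam) q') (h : q.2 - q.1 = q'.2 - q'.1) : q = q' := by
  obtain ⟨h1, hrow, -⟩ := (addable_cells_iff hs).1 hq
  obtain ⟨h1', hrow', -⟩ := (addable_cells_iff hs).1 hq'
  have := getD_injOn hs hpos (hq.row_le_length hs) (hq'.row_le_length hs) (by omega)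
  exact Prod.ext (by omega) (by omega)

theorem cells_addToRow_of_addable (hs : lam.Pairwise (· > ·)) {q : ℕ × ℕ}
    (hq : Addable (cells lam) q) : cells (addToRow lam q.1) = insert q (cells lam) := by
  obtain ⟨h1, hrow, -⟩ := (addable_cells_iff hs).1 hq
  rw [cells_addToRow h1 (hq.row_le_length hs), ← hrow]

end StrictPartition

namespace SBT

variable {n : ℕ} (U : SBT n)

theorem cells_finite : (cells U.lam).Finite :=
  Set.Finite.of_finite_image (U.bij.image_eq ▸ Set.finite_Icc 1 n) U.bij.injOn

theorem cells_ncard : (cells U.lam).ncard = n := by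
  simp [U.bij.ncard_eq]

theorem box_spec {a : ℕ} (ha : a ∈ Set.Icc 1 n) :
    U.box a ∈ cells U.lam ∧ U.entry (U.box a) = a := by
  have h : ∃ p ∈ cells U.lam, U.entry p = a := U.bij.surjOn ha
  rw [SBT.box, dif_pos h]
  exact h.choose_spec

theorem box_eq {p : ℕ × ℕ} {a : ℕ} (hp : p ∈ cells U.lam) (ha : U.entry p = a) :
    U.box a = p :=
  have h := U.box_spec (ha ▸ U.bij.mapsTo hp)
  U.bij.injOn h.1 hp (h.2.trans ha.symm)

theorem kappa_eq_sqc (a : ℕ) :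
    U.kappa a = (if a ∈ U.barred then -1 else 1) * sqc (U.box a) :=
  rfl

theorem content_pos_of_mem_barred {a : ℕ} (ha : a ∈ Set.Icc 1 n) (hbar : a ∈ U.barred) :
    0 < (U.box a).2 - (U.box a).1 := by
  obtain ⟨hmem, hentry⟩ := U.box_spec ha
  have := U.barred_nondiag _ hmem (by rwa [hentry])
  have := hmem.2.1
  omega

theorem shapeAt_self : U.shapeAt n = cells U.lam :=
  Set.ext fun _ => ⟨And.left, fun hp => ⟨hp, (U.bij.mapsTo hp).2⟩⟩

theorem shapeAt_finite (k : ℕ) : (U.shapeAt k).Finite :=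
  U.cells_finite.subset fun _ => And.left

theorem shapeAt_ncard {k : ℕ} (hk : k ≤ n) : (U.shapeAt k).ncard = k := by
  have hbij : Set.BijOn U.entry (U.shapeAt k) (Set.Icc 1 k) := by
    refine ⟨fun p hp => ⟨(U.bij.mapsTo hp.1).1, hp.2⟩, U.bij.injOn.mono fun _ => And.left,
      fun a ha => ?_⟩
    obtain ⟨p, hp, rfl⟩ := U.bij.surjOn ⟨ha.1, ha.2.trans hk⟩
    exact ⟨p, ⟨hp, ha.2⟩, rfl⟩
  simp [hbij.ncard_eq]

theorem ext {U W : SBT n} (hlam : U.lam = W.lam) (hentry : U.entry = W.entry)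
    (hbarred : U.barred = W.barred) : U = W := by
  cases U
  cases W
  subst hlam hentry hbarred
  rfl

end SBT

theorem sqrt_mul_succ_strictMono : StrictMono fun c : ℕ => √((c : ℝ) * (c + 1)) :=
  strictMono_nat_of_lt_succ fun c => Real.sqrt_lt_sqrt (by positivity) (by push_cast; nlinarith)

theorem sign_mul_sqrt_inj {b b' : Prop} [Decidable b] [Decidable b'] {c c' : ℕ}
    (hb : b → 0 < c) (hb' : b' → 0 < c')
    (h : (if b then -1 else 1) * ((√((c : ℝ) * (c + 1)) : ℝ) : ℂ) =
      (if b' then -1 else 1) * ((√((c' : ℝ) * (c' + 1)) : ℝ) : ℂ)) :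
    (b ↔ b') ∧ c = c' := by
  have hpos : ∀ {d : ℕ}, 0 < d → 0 < √((d : ℝ) * (d + 1)) := fun hd => by
    simpa using sqrt_mul_succ_strictMono hd
  by_cases hbq : b <;> by_cases hbq' : b' <;>
    simp only [hbq, hbq', if_true, if_false, neg_one_mul, one_mul, neg_inj,
      ← Complex.ofReal_neg, Complex.ofReal_inj] at h
  · exact ⟨iff_of_true hbq hbq', sqrt_mul_succ_strictMono.injective h⟩
  · linarith [hpos (hb hbq), Real.sqrt_nonneg ((c' : ℝ) * (c' + 1))]
  · linarith [hpos (hb' hbq'), Real.sqrt_nonneg ((c : ℝ) * (c + 1))]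
  · exact ⟨iff_of_false hbq hbq', sqrt_mul_succ_strictMono.injective h⟩

theorem mem_bVals {n : ℕ} {S : Set (ℕ × ℕ)} (hS : S.Finite) (hn : S.ncard ≤ n) {κ : ℂ} :
    κ ∈ bVals n S ↔ ∃ q, Addable S q ∧ (κ = sqc q ∨ q.1 ≠ q.2 ∧ κ = -sqc q) := by
  simp only [bVals, Finset.mem_biUnion, Finset.mem_filter, Finset.mem_product, Finset.mem_Icc]
  constructor
  · rintro ⟨q, ⟨-, hq⟩, hκ⟩
    refine ⟨q, hq, ?_⟩
    split_ifs at hκ with hd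
    · exact Or.inl (Finset.mem_singleton.1 hκ)
    · simpa [hd] using hκ
  · rintro ⟨q, hq, hκ⟩
    obtain ⟨h1, h12, h2⟩ := hq.bounds hS
    refine ⟨q, ⟨⟨⟨h1, by omega⟩, by omega, by omega⟩, hq⟩, ?_⟩
    split_ifs with hd
    · simpa [hd] using hκ
    · simpa [or_iff_not_imp_left, hd] using hκ

theorem bVals_eq_of_ncard_le {S : Set (ℕ × ℕ)} (hS : S.Finite) {n m : ℕ} (hn : S.ncard ≤ n)
    (hm : S.ncard ≤ m) : bVals n S = bVals m S :=
  Finset.ext fun _ => by rw [mem_bVals hS hn, mem_bVals hS hm]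

theorem cells_nil : cells [] = ∅ :=
  Set.eq_empty_of_forall_notMem fun p hp => by have := hp.2; simp at this; omega

theorem bVals_cells_nil (n : ℕ) : bVals n (cells []) = {0} := by
  ext κ
  rw [mem_bVals (by simp [cells_nil]) (by simp [cells_nil]), Finset.mem_singleton]
  constructor
  · rintro ⟨q, hq, hκ⟩
    obtain ⟨h1, hrow, habove⟩ := (addable_cells_iff List.Pairwise.nil).1 hq
    simp only [List.getD_nil, zero_add] at hrow habove
    have hq1 : q.1 = 1 := by omega
    rcases hκ with hκ | ⟨hd, -⟩
    · simp [hκ, sqc, hrow]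
    · exact absurd hrow.symm hd
  · rintro rfl
    exact ⟨(1, 1), (addable_cells_iff List.Pairwise.nil).2 ⟨le_rfl, rfl, by simp⟩,
      Or.inl (by simp [sqc])⟩

theorem bVals_nonempty {n : ℕ} (V : SBT n) : (bVals (n + 1) (cells V.lam)).Nonempty :=
  ⟨_, (mem_bVals V.cells_finite (by rw [V.cells_ncard]; omega)).2
    ⟨(1, V.lam.getD 0 0 + 1), (addable_cells_iff V.sorted).2 ⟨le_rfl, rfl, by simp⟩,
      Or.inl rfl⟩⟩

namespace Extends

variable {n : ℕ} {V : SBT n} {W : SBT (n + 1)}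

theorem mem_barred_iff (hE : Extends V W) {a : ℕ} (ha : a ≠ n + 1) :
    a ∈ W.barred ↔ a ∈ V.barred := by
  simp [hE.2.2, ha]

theorem box_eq (hE : Extends V W) {a : ℕ} (ha : a ∈ Set.Icc 1 n) : W.box a = V.box a := by
  obtain ⟨hp, hpa⟩ := V.box_spec ha
  exact W.box_eq (hE.1 hp) ((hE.2.1 _ hp).trans hpa)

theorem box_top_notMem (hE : Extends V W) : W.box (n + 1) ∉ cells V.lam := fun hV => by
  have h := (W.box_spec ⟨by omega, le_rfl⟩).2
  rw [hE.2.1 _ hV] at h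
  have := (V.bij.mapsTo hV).2
  omega

theorem cells_eq (hE : Extends V W) : cells W.lam = insert (W.box (n + 1)) (cells V.lam) := by
  refine (Set.eq_of_subset_of_ncard_le
    (Set.insert_subset (W.box_spec ⟨by omega, le_rfl⟩).1 hE.1) ?_ W.cells_finite).symm
  rw [Set.ncard_insert_of_notMem hE.box_top_notMem V.cells_finite, V.cells_ncard, W.cells_ncard]

theorem addable (hE : Extends V W) : Addable (cells V.lam) (W.box (n + 1)) :=
  ⟨hE.box_top_notMem, hE.cells_eq ▸ cells_isShifted W.sorted⟩

theorem entry_eq (hE : Extends V W) :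
    W.entry = Function.update V.entry (W.box (n + 1)) (n + 1) := by
  funext p
  by_cases hpq : p = W.box (n + 1)
  · rw [hpq, Function.update_self, (W.box_spec ⟨by omega, le_rfl⟩).2]
  · rw [Function.update_of_ne hpq]
    by_cases hpV : p ∈ cells V.lam
    · exact hE.2.1 p hpV
    · rw [V.entry_junk p hpV, W.entry_junk p (by simp [hE.cells_eq, hpq, hpV])]

theorem shapeAt_eq (hE : Extends V W) {k : ℕ} (hk : k ≤ n) : W.shapeAt k = V.shapeAt k := by
  ext p
  simp only [SBT.shapeAt, Set.mem_ofPred_eq, hE.cells_eq, hE.entry_eq, Set.mem_insert_iff]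
  by_cases hpq : p = W.box (n + 1)
  · subst hpq
    simp only [Function.update_self, true_or, true_and, hE.box_top_notMem, false_and,
      iff_false]
    omega
  · simp [hpq]

theorem kappa_eq (hE : Extends V W) {a : ℕ} (ha : a ∈ Set.Icc 1 n) :
    W.kappa a = V.kappa a := by
  rw [SBT.kappa_eq_sqc, SBT.kappa_eq_sqc, hE.box_eq ha, if_congr (hE.mem_barred_iff (by
    have := ha.2; omega)) rfl rfl]

theorem eAux_eq (hE : Extends V W) (N : ℕ) : ∀ k ≤ n, eAux N W k = eAux N V k
  | 0, _ => rfl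
  | 1, _ => rfl
  | k + 2, hk => by
    have hS : (V.shapeAt (k + 1)).ncard ≤ n := by rw [V.shapeAt_ncard (by omega)]; omega
    rw [eAux, eAux, hE.eAux_eq N (k + 1) (by omega), hE.shapeAt_eq (by omega),
      hE.kappa_eq ⟨by omega, hk⟩, bVals_eq_of_ncard_le (V.shapeAt_finite _) (by omega) hS]

theorem ext {W' : SBT (n + 1)} (hE : Extends V W) (hE' : Extends V W')
    (hbox : W.box (n + 1) = W'.box (n + 1))
    (hbarred : n + 1 ∈ W.barred ↔ n + 1 ∈ W'.barred) : W = W' := by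
  refine SBT.ext (eq_of_cells_eq W.pos W'.pos ?_) ?_ ?_
  · rw [hE.cells_eq, hE'.cells_eq, hbox]
  · rw [hE.entry_eq, hE'.entry_eq, hbox]
  · ext a
    by_cases ha : a = n + 1
    · rwa [ha]
    · rw [hE.mem_barred_iff ha, hE'.mem_barred_iff ha]

theorem kappa_mem_bVals (hE : Extends V W) : W.kappa (n + 1) ∈ bVals (n + 1) (cells V.lam) := by
  rw [mem_bVals V.cells_finite (by rw [V.cells_ncard]; omega)]
  refine ⟨W.box (n + 1), hE.addable, ?_⟩
  rw [SBT.kappa_eq_sqc]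
  split_ifs with hbar
  · have := W.content_pos_of_mem_barred ⟨by omega, le_rfl⟩ hbar
    exact Or.inr ⟨by omega, neg_one_mul _⟩
  · exact Or.inl (one_mul _)

end Extends

namespace SBT

variable {n : ℕ} (V : SBT n) {q : ℕ × ℕ}

theorem update_entry_lt (hq : Addable (cells V.lam) q) {p p' : ℕ × ℕ}
    (hp : p ∈ insert q (cells V.lam)) (hp' : p' ∈ insert q (cells V.lam))
    (hle : p.1 ≤ p'.1 ∧ p.2 ≤ p'.2) (hne : p ≠ p')
    (hV : p ∈ cells V.lam → p' ∈ cells V.lam → V.entry p < V.entry p') :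
    Function.update V.entry q (n + 1) p < Function.update V.entry q (n + 1) p' := by
  have hpq : p ≠ q := by
    rintro rfl
    have hp'V := hp'.resolve_left (Ne.symm hne)
    obtain ⟨h1, h12⟩ := hq.2.1 p (Set.mem_insert _ _)
    exact hq.1 ((cells_isShifted V.sorted).mem_of_le hp'V h1 hle.1 h12 hle.2)
  have hpV := hp.resolve_left hpq
  rw [Function.update_of_ne hpq]
  by_cases hp'q : p' = q
  · rw [hp'q, Function.update_self]
    exact Nat.lt_succ_of_le (V.bij.mapsTo hpV).2
  · rw [Function.update_of_ne hp'q]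
    exact hV hpV (hp'.resolve_left hp'q)

theorem update_entry_bijOn (hq : Addable (cells V.lam) q) :
    Set.BijOn (Function.update V.entry q (n + 1)) (insert q (cells V.lam)) (Set.Icc 1 (n + 1)) := by
  have h := (V.bij.congr fun p hp => (Function.update_of_ne (ne_of_mem_of_not_mem hp hq.1)
    (n + 1) V.entry).symm).insert (a := q) (by simp)
  rwa [Function.update_self, Set.insert_Icc_right_eq_Icc_add_one (by omega)] at h

def extend (hq : Addable (cells V.lam) q) (b : Bool) (hb : b → q.1 ≠ q.2) : SBT (n + 1) where
  lam := addToRow V.lam q.1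
  sorted := pairwise_gt_of_isShifted (pos_of_mem_addToRow V.pos)
    (cells_addToRow_of_addable V.sorted hq ▸ hq.2)
  pos := pos_of_mem_addToRow V.pos
  sum_eq := by rw [sum_addToRow, V.sum_eq]
  entry := Function.update V.entry q (n + 1)
  bij := cells_addToRow_of_addable V.sorted hq ▸ V.update_entry_bijOn hq
  entry_junk p hp := by
    rw [cells_addToRow_of_addable V.sorted hq, Set.mem_insert_iff, not_or] at hp
    rw [Function.update_of_ne hp.1, V.entry_junk p hp.2]
  row_incr p hp hp' := by
    rw [cells_addToRow_of_addable V.sorted hq] at hp hp'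
    exact V.update_entry_lt hq hp hp' ⟨le_rfl, by simp⟩ (by simp [Prod.ext_iff]) (V.row_incr p)
  col_incr p hp hp' := by
    rw [cells_addToRow_of_addable V.sorted hq] at hp hp'
    exact V.update_entry_lt hq hp hp' ⟨by simp, le_rfl⟩ (by simp [Prod.ext_iff]) (V.col_incr p)
  barred := if b then insert (n + 1) V.barred else V.barred
  barred_sub := by
    have := V.barred_sub.trans (Set.Icc_subset_Icc_right (Nat.le_succ n))
    split_ifs
    · exact Set.insert_subset ⟨by omega, le_rfl⟩ this
    · exact this
  barred_nondiag p hp hbar := by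
    rw [cells_addToRow_of_addable V.sorted hq] at hp
    by_cases hpq : p = q
    · subst hpq
      rw [Function.update_self] at hbar
      cases b
      · exact absurd (V.barred_sub hbar).2 (by omega)
      · exact hb rfl
    · rw [Function.update_of_ne hpq] at hbar
      have hpV := hp.resolve_left hpq
      have hne : V.entry p ≠ n + 1 := by have := (V.bij.mapsTo hpV).2; omega
      refine V.barred_nondiag p hpV ?_
      split_ifs at hbar
      · exact hbar.resolve_left hne
      · exact hbar

variable (hq : Addable (cells V.lam) q) (b : Bool) (hb : b → q.1 ≠ q.2)

theorem extend_extends : Extends V (V.extend hq b hb) := by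
  refine ⟨cells_addToRow_of_addable V.sorted hq ▸ Set.subset_insert q _,
    fun p hp => Function.update_of_ne (ne_of_mem_of_not_mem hp hq.1) _ _, ?_⟩
  have : n + 1 ∉ V.barred := fun h => by have := (V.barred_sub h).2; omega
  change V.barred = (if b then insert (n + 1) V.barred else V.barred) \ {n + 1}
  split_ifs
  · rw [Set.insert_sdiff_self_of_notMem this]
  · rw [Set.sdiff_singleton_eq_self this]

theorem kappa_extend :
    (V.extend hq b hb).kappa (n + 1) = (if b then -1 else 1) * sqc q := by
  have hbox : (V.extend hq b hb).box (n + 1) = q :=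
    box_eq _ (cells_addToRow_of_addable V.sorted hq ▸ Set.mem_insert q _)
      (Function.update_self _ _ _)
  have hbar : n + 1 ∈ (V.extend hq b hb).barred ↔ b := by
    change n + 1 ∈ (if b then insert (n + 1) V.barred else V.barred) ↔ b
    split_ifs with h
    · simp [h]
    · simpa [h] using fun h' => by have := (V.barred_sub h').2; omega
  rw [kappa_eq_sqc, hbox, if_congr hbar rfl rfl]

end SBT

theorem kappa_injOn_extends {n : ℕ} (V : SBT n) :
    Set.InjOn (fun W : SBT (n + 1) => W.kappa (n + 1)) {W | Extends V W} := by
  intro W hE W' hE' hκ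
  have htop : n + 1 ∈ Set.Icc 1 (n + 1) := ⟨by omega, le_rfl⟩
  obtain ⟨hbar, hcontent⟩ := sign_mul_sqrt_inj (W.content_pos_of_mem_barred htop)
    (W'.content_pos_of_mem_barred htop) hκ
  exact hE.ext hE' (Addable.eq_of_content_eq V.sorted V.pos hE.addable hE'.addable hcontent) hbar

theorem kappa_bijOn_extends {n : ℕ} (V : SBT n) :
    Set.BijOn (fun W : SBT (n + 1) => W.kappa (n + 1)) {W | Extends V W}
      (bVals (n + 1) (cells V.lam)) := by
  refine ⟨fun W hE => hE.kappa_mem_bVals, kappa_injOn_extends V, fun κ hκ => ?_⟩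
  obtain ⟨q, hq, hκq | ⟨hd, hκq⟩⟩ :=
    (mem_bVals V.cells_finite (by rw [V.cells_ncard]; omega)).1 hκ
  · exact ⟨V.extend hq false (by simp), V.extend_extends hq _ _, by
      simp [SBT.kappa_extend, hκq]⟩
  · exact ⟨V.extend hq true fun _ => hd, V.extend_extends hq _ _, by
      simp [SBT.kappa_extend, hκq]⟩

theorem eAux_add_two (N : ℕ) {r : ℕ} (U : SBT r) (k : ℕ) :
    eAux N U (k + 2) = eAux N U (k + 1) * Polynomial.aeval (xS N (k + 2))
      (Lagrange.basis (bVals r (U.shapeAt (k + 1))) id (U.kappa (k + 2))) := by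
  simp [eAux, Lagrange.basis, Lagrange.basisDivisor, Finset.sdiff_singleton_eq_erase]

theorem Extends.eU_eq {n : ℕ} {V : SBT n} {W : SBT (n + 1)} (hE : Extends V W) :
    eU W = eIn (n + 1) V * Polynomial.aeval (xS (n + 1) (n + 1))
      (Lagrange.basis (bVals (n + 1) (cells V.lam)) id (W.kappa (n + 1))) := by
  cases n with
  | zero =>
    have hlam : V.lam = [] := List.eq_nil_iff_forall_not_mem.2 fun p hp =>
      (V.pos p hp).ne' (List.sum_eq_zero_iff.1 V.sum_eq p hp)
    have hκ := hE.kappa_mem_bVals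
    rw [hlam, bVals_cells_nil, Finset.mem_singleton] at hκ
    rw [hlam, bVals_cells_nil, hκ, Lagrange.basis_singleton, map_one, mul_one]
    rfl
  | succ m =>
    rw [eU, eIn, eAux_add_two, hE.eAux_eq _ _ le_rfl, hE.shapeAt_eq le_rfl, V.shapeAt_self]
    rfl

theorem statement6_general (n : ℕ) (V : SBT n) :
    eIn (n + 1) V = ∑ᶠ (W : SBT (n + 1)) (_ : Extends V W), eU W := by
  set s := bVals (n + 1) (cells V.lam)
  have hsum : ∑ᶠ (W : SBT (n + 1)) (_ : Extends V W), eU W =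
      ∑ᶠ κ ∈ (s : Set ℂ), eIn (n + 1) V *
        Polynomial.aeval (xS (n + 1) (n + 1)) (Lagrange.basis s id κ) :=
    finsum_mem_eq_of_bijOn _ (kappa_bijOn_extends V) fun _ hE => Extends.eU_eq hE
  rw [hsum, finsum_mem_coe_finset, ← Finset.mul_sum, ← map_sum,
    Lagrange.sum_basis Function.injective_id.injOn (bVals_nonempty V), map_one, mul_one]

/-- Branching rule: for a standard barred tableau `V` with `n` boxes, viewed inside
`S_{n+1}`, one has `e_V = Σ_W e_W`, the sum over all standard barred tableaux `W`
with `n+1` boxes obtained from `V` by adding one box containing `n+1` or `n+1` barred. -/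
theorem statement6 (n : ℕ) (hn : 1 ≤ n) (V : SBT n) :
    eIn (n + 1) V = ∑ᶠ (W : SBT (n + 1)) (_ : Extends V W), eU W :=
  statement6_general n V
end
end

section
/- For a ≠ b and u, v ∈ ℂ with u² ≠ v², one has φ_{ab}(u,v) · φ_{ba}(v,u) = A(u,v) · 1 in the Sergeev superalgebra S_n, where A(u,v) = 1 − 1/(u−v)² − 1/(u+v)². -/
/-!
With `T = t_{ab}`, `X = u c_a - v c_b` and `k = √2 / (u² - v²)` one has
`φ_{ab}(u,v) = 1 + k T X` and, since `t_{ba} = -t_{ab}`, `φ_{ba}(v,u) = 1 - k T X`.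
Now `t_{ab}` is a palindromic word of odd length in the involutions `t_i`, so it is an
involution anticommuting with every `c_m`; hence `(T X)² = -X² = u² + v²` and the product
is `1 - 2 (u² + v²) / (u² - v²)² = A(u,v)`.
-/

open scoped Classical

noncomputable section

/-- The rational function `φ_{ab}(u,v) = 1 + t_{ab} √2 (u c_a - v c_b)/(u² - v²)`
with values in `S_n`. -/
def phiF (n a b : ℕ) (u v : ℂ) : Sergeev n :=
  1 + ((Real.sqrt 2 : ℂ) / (u ^ 2 - v ^ 2)) • (tsgn n a b * (u • cS n a - v • cS n b))

/-- `A(u,v) = 1 - 1/(u-v)² - 1/(u+v)²`. -/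
def Afun (u v : ℂ) : ℂ := 1 - 1 / (u - v) ^ 2 - 1 / (u + v) ^ 2

def Anticommute {R : Type*} [Ring R] (a b : R) : Prop := a * b = -(b * a)

namespace Anticommute

variable {R : Type*} [Ring R] {a b : R}

protected theorem eq (h : Anticommute a b) : a * b = -(b * a) := h

theorem symm (h : Anticommute a b) : Anticommute b a := by
  rw [Anticommute, h, neg_neg]

theorem neg_right (h : Anticommute a b) : Anticommute a (-b) := by
  rw [Anticommute, mul_neg, neg_mul, h]

theorem mul_list_prod (a : R) :
    ∀ l : List R, (∀ x ∈ l, Anticommute a x) → a * l.prod = (-1) ^ l.length * (l.prod * a)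
  | [], _ => by simp
  | x :: xs, h => by
    have ih := mul_list_prod a xs fun y hy => h y (List.mem_cons_of_mem x hy)
    rw [List.prod_cons, ← mul_assoc, h x List.mem_cons_self, neg_mul, mul_assoc, ih]
    simp [pow_succ, mul_assoc, ((Commute.neg_one_left x).pow_left _).left_comm]

theorem list_prod_right {l : List R} (h : ∀ x ∈ l, Anticommute a x)
    (hl : Odd l.length) : Anticommute a l.prod := by
  rw [Anticommute, mul_list_prod a l h, hl.neg_one_pow, neg_one_mul]

theorem mul_mul_self {t x : R} (ht : t * t = 1) (h : Anticommute x t) :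
    t * x * (t * x) = -(x * x) := by
  rw [mul_assoc, ← mul_assoc x, h, neg_mul, mul_neg, ← mul_assoc, ← mul_assoc, ht, one_mul]

variable {K A : Type*} [CommRing K] [Ring A] [Algebra K A]

theorem smul_sub_smul_mul_self {c d : A} (hc : c * c = -1) (hd : d * d = -1)
    (hcd : Anticommute c d) (u v : K) :
    (u • c - v • d) * (u • c - v • d) = -(u ^ 2 + v ^ 2) • (1 : A) := by
  simp only [sub_mul, mul_sub, smul_mul_smul_comm, hc, hd, hcd.eq]
  module

end Anticommute

theorem List.prod_mul_prod_reverse_of_mul_self {M : Type*} [Monoid M] :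
    ∀ l : List M, (∀ x ∈ l, x * x = 1) → l.prod * l.reverse.prod = 1
  | [], _ => by simp
  | x :: xs, h => by
    have ih := prod_mul_prod_reverse_of_mul_self xs fun y hy => h y (mem_cons_of_mem x hy)
    calc (x :: xs).prod * (x :: xs).reverse.prod = x * (xs.prod * xs.reverse.prod) * x := by
          simp [prod_append, mul_assoc]
      _ = 1 := by rw [ih, mul_one, h x mem_cons_self]

theorem one_add_smul_mul_one_sub_smul {K A : Type*} [CommRing K] [Ring A] [Algebra K A]
    (k : K) (y : A) : (1 + k • y) * (1 - k • y) = 1 - k ^ 2 • (y * y) := by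
  rw [← (Commute.one_left (k • y)).mul_self_sub_mul_self_eq, one_mul, smul_mul_smul_comm, sq]

/-- The second factor is `φ_{ba}(v,u)` in the shape it takes after `t_{ba} = -t_{ab}`. -/
theorem one_add_smul_mul_one_add_smul_of_anticommute {K A : Type*} [CommRing K] [Ring A]
    [Algebra K A] {t c d : A} (ht : t * t = 1) (hc : c * c = -1) (hd : d * d = -1)
    (hcd : Anticommute c d) (hct : Anticommute c t) (hdt : Anticommute d t) (k u v : K) :
    (1 + k • (t * (u • c - v • d))) * (1 + (-k) • (-t * (v • d - u • c)))
      = (1 - k ^ 2 * (u ^ 2 + v ^ 2)) • (1 : A) := by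
  have hX : Anticommute (u • c - v • d) t := by
    simp only [Anticommute, sub_mul, mul_sub, smul_mul_assoc, mul_smul_comm, hct.eq, hdt.eq]
    module
  rw [neg_mul, ← mul_neg, neg_sub, neg_smul, ← sub_eq_add_neg, one_add_smul_mul_one_sub_smul,
    hX.mul_mul_self ht, hcd.smul_sub_smul_mul_self hc hd]
  module

namespace Sergeev

variable {n : ℕ}

theorem tS_eq_zero {a : ℕ} (h : ¬(1 ≤ a ∧ a < n)) : tS n a = 0 := by
  simp [tS, tf, h]

theorem cS_eq_zero {a : ℕ} (h : ¬(1 ≤ a ∧ a ≤ n)) : cS n a = 0 := by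
  simp [cS, cf, h]

theorem tS_mul_self {a : ℕ} (h1 : 1 ≤ a) (h2 : a < n) : tS n a * tS n a = 1 := by
  simpa [tS] using RingQuot.mkAlgHom_rel ℂ (SRel.tsq a h1 h2)

theorem cS_mul_self {a : ℕ} (h1 : 1 ≤ a) (h2 : a ≤ n) : cS n a * cS n a = -1 := by
  simpa [cS] using RingQuot.mkAlgHom_rel ℂ (SRel.csq a h1 h2)

theorem anticommute_cS_cS {a b : ℕ} (hab : a ≠ b) : Anticommute (cS n a) (cS n b) := by
  by_cases ha : 1 ≤ a ∧ a ≤ n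
  · by_cases hb : 1 ≤ b ∧ b ≤ n
    · simpa [Anticommute, cS] using
        RingQuot.mkAlgHom_rel ℂ (SRel.canti a b ha.1 ha.2 hb.1 hb.2 hab)
    · simp [Anticommute, cS_eq_zero hb]
  · simp [Anticommute, cS_eq_zero ha]

theorem anticommute_cS_tS (m k : ℕ) : Anticommute (cS n m) (tS n k) := by
  by_cases hk : 1 ≤ k ∧ k < n
  · by_cases hm : 1 ≤ m ∧ m ≤ n
    · refine Anticommute.symm ?_
      simpa [Anticommute, tS, cS] using
        RingQuot.mkAlgHom_rel ℂ (SRel.tc k m hk.1 hk.2 hm.1 hm.2)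
    · simp [Anticommute, cS_eq_zero hm]
  · simp [Anticommute, tS_eq_zero hk]

def ttWord (a b : ℕ) : List ℕ :=
  (List.range' (a + 1) (b - 1 - a)).reverse ++ a :: List.range' (a + 1) (b - 1 - a)

theorem ttS_eq_smul_prod (a b : ℕ) :
    ttS n a b = (-1 : ℂ) ^ (b - a - 1) • ((ttWord a b).map (tS n)).prod := by
  simp [ttS, ttWord, List.prod_append, mul_assoc]

theorem ttWord_reverse (a b : ℕ) : (ttWord a b).reverse = ttWord a b := by
  simp [ttWord]

theorem odd_length_ttWord (a b : ℕ) : Odd (ttWord a b).length := by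
  simp [ttWord]

theorem mem_ttWord {a b k : ℕ} (hab : a < b) (hk : k ∈ ttWord a b) : a ≤ k ∧ k < b := by
  simp only [ttWord, List.mem_append, List.mem_reverse, List.mem_cons, List.mem_range'_1] at hk
  omega

theorem ttS_mul_self {a b : ℕ} (ha : 1 ≤ a) (hab : a < b) (hb : b ≤ n) :
    ttS n a b * ttS n a b = 1 := by
  have hinv : ∀ x ∈ (ttWord a b).map (tS n), x * x = 1 := by
    simp only [List.mem_map, forall_exists_index, and_imp, forall_apply_eq_imp_iff₂]
    intro k hk
    have hkb := mem_ttWord hab hk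
    exact tS_mul_self (by omega) (by omega)
  have hword := List.prod_mul_prod_reverse_of_mul_self _ hinv
  rw [← List.map_reverse, ttWord_reverse] at hword
  rw [ttS_eq_smul_prod, smul_mul_smul_comm, hword, ← pow_add, ← two_mul, pow_mul]
  simp

theorem anticommute_cS_ttS (m a b : ℕ) : Anticommute (cS n m) (ttS n a b) := by
  have hword : Anticommute (cS n m) ((ttWord a b).map (tS n)).prod :=
    Anticommute.list_prod_right (by simp [anticommute_cS_tS])
      (by simpa using odd_length_ttWord a b)
  rw [Anticommute, ttS_eq_smul_prod, mul_smul_comm, smul_mul_assoc, hword.eq, smul_neg]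

theorem tsgn_swap {a b : ℕ} (hab : a ≠ b) : tsgn n b a = -tsgn n a b := by
  rcases hab.lt_or_gt with h | h <;> simp [tsgn, h, h.not_gt]

theorem tsgn_mul_self {a b : ℕ} (ha1 : 1 ≤ a) (ha2 : a ≤ n) (hb1 : 1 ≤ b) (hb2 : b ≤ n)
    (hab : a ≠ b) : tsgn n a b * tsgn n a b = 1 := by
  rcases hab.lt_or_gt with h | h
  · simpa [tsgn, h] using ttS_mul_self ha1 h hb2
  · rw [tsgn, if_neg h.not_gt, if_pos h]
    exact (neg_mul_neg _ _).trans (ttS_mul_self hb1 h ha2)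

theorem anticommute_cS_tsgn (m a b : ℕ) : Anticommute (cS n m) (tsgn n a b) := by
  unfold tsgn
  split_ifs
  · exact anticommute_cS_ttS m a b
  · exact (anticommute_cS_ttS m b a).neg_right
  · simp [Anticommute]

end Sergeev

theorem Afun_eq {u v : ℂ} (huv : u ^ 2 ≠ v ^ 2) :
    Afun u v = 1 - ((Real.sqrt 2 : ℂ) / (u ^ 2 - v ^ 2)) ^ 2 * (u ^ 2 + v ^ 2) := by
  have hsub : u - v ≠ 0 := fun h => huv (by rw [sub_eq_zero.mp h])
  have hadd : u + v ≠ 0 := fun h => huv (by rw [eq_neg_of_add_eq_zero_left h, neg_sq])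
  have hsqrt : (Real.sqrt 2 : ℂ) ^ 2 = 2 := by
    rw [← Complex.ofReal_pow, Real.sq_sqrt zero_le_two]; norm_num
  rw [Afun, div_pow, hsqrt, show u ^ 2 - v ^ 2 = (u - v) * (u + v) by ring]
  field_simp
  ring

/-- `φ_{ab}(u,v) φ_{ba}(v,u) = A(u,v)` in the Sergeev superalgebra `S_n`. -/
theorem statement14 (n a b : ℕ) (ha1 : 1 ≤ a) (ha2 : a ≤ n) (hb1 : 1 ≤ b) (hb2 : b ≤ n)
    (hab : a ≠ b) (u v : ℂ) (huv : u ^ 2 ≠ v ^ 2) :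
    phiF n a b u v * phiF n b a v u = algebraMap ℂ (Sergeev n) (Afun u v) := by
  have hcoeff :
      (Real.sqrt 2 : ℂ) / (v ^ 2 - u ^ 2) = -((Real.sqrt 2 : ℂ) / (u ^ 2 - v ^ 2)) := by
    rw [← div_neg, neg_sub]
  rw [phiF, phiF, Sergeev.tsgn_swap hab, hcoeff, Afun_eq huv, Algebra.algebraMap_eq_smul_one]
  -- `exact`, not `rw`: negation and subtraction on `Sergeev n` elaborate to `RingQuot`'s own
  -- `Neg` and `Sub` instances, which agree with the `Ring` ones only after unfolding.
  exact one_add_smul_mul_one_add_smul_of_anticommute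
    (Sergeev.tsgn_mul_self ha1 ha2 hb1 hb2 hab) (Sergeev.cS_mul_self ha1 ha2)
    (Sergeev.cS_mul_self hb1 hb2) (Sergeev.anticommute_cS_cS hab)
    (Sergeev.anticommute_cS_tsgn a a b) (Sergeev.anticommute_cS_tsgn b a b) _ u v
end
end
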